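/- If S ∈ GL_m(F) and T ∈ GL_n(F) are ideal Perron similarities, then S ⊗ T is ideal: there is an index r ∈ ⟨mn⟩ with e_r^T(S⊗T) = e^T, and every row of S ⊗ T belongs to 𝒞(S ⊗ T). -/

import Mathlib

/-- The Kronecker product of vectors. -/
def vecKron {F : Type*} [Mul F] {m n : ℕ} (x : Fin m → F) (y : Fin n → F) :
    Fin (m * n) → F :=
  fun i => x i.divNat * y i.modNat

/-- The Kronecker product of matrices. -/
def matKron {F : Type*} [Mul F] {m n p q : ℕ}
    (S : Matrix (Fin m) (Fin n) F) (T : Matrix (Fin p) (Fin q) F) :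
    Matrix (Fin (m * p)) (Fin (n * q)) F :=
  fun i j => S i.divNat j.divNat * T i.modNat j.modNat

/-- An entry of a matrix over `F = ℝ` or `ℂ` is nonnegative:
it is a nonnegative real number. -/
def entryNonneg {F : Type*} [RCLike F] (z : F) : Prop :=
  ∃ r : ℝ, 0 ≤ r ∧ z = (r : F)

/-- The Perron spectracone `𝒞(S) = {x : S D_x S⁻¹ ≥ 0 entrywise}`. -/
def spectracone {F : Type*} [RCLike F] {n : ℕ} (S : Matrix (Fin n) (Fin n) F) :
    Set (Fin n → F) :=
  {x | ∀ i j, entryNonneg ((S * Matrix.diagonal x * S⁻¹) i j)}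

/-- A matrix is ideal if some row is the all-ones row and every row belongs to
its spectracone (the row characterization of ideal Perron similarities). -/
def IsIdeal {F : Type*} [RCLike F] {n : ℕ} (S : Matrix (Fin n) (Fin n) F) : Prop :=
  (∃ k, ∀ j, S k j = 1) ∧ ∀ i, S i ∈ spectracone S

/-!
The Kronecker product is multiplicative, commutes with inversion, and satisfies
`D_{x ⊗ y} = D_x ⊗ D_y`. Hence `(S ⊗ T) D_{x ⊗ y} (S ⊗ T)⁻¹ = (S D_x S⁻¹) ⊗ (T D_y T⁻¹)`, whose
entries are products of nonnegative entries, so `x ∈ 𝒞(S)` and `y ∈ 𝒞(T)` give `x ⊗ y ∈ 𝒞(S ⊗ T)`.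
Each row of `S ⊗ T` is the Kronecker product of a row of `S` and a row of `T`, and the product of
the all-ones rows is the all-ones row.
-/

open Matrix Kronecker

section Kronecker

variable {F : Type*} {m n p q r s : ℕ}

lemma Fin.divNat_finProdFinEquiv (k : Fin m) (l : Fin n) :
    (finProdFinEquiv (k, l)).divNat = k :=
  congrArg Prod.fst (finProdFinEquiv.symm_apply_apply (k, l))

lemma Fin.modNat_finProdFinEquiv (k : Fin m) (l : Fin n) :
    (finProdFinEquiv (k, l)).modNat = l :=
  congrArg Prod.snd (finProdFinEquiv.symm_apply_apply (k, l))

lemma matKron_apply_row [Mul F] (A : Matrix (Fin m) (Fin n) F) (B : Matrix (Fin p) (Fin q) F)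
    (i : Fin (m * p)) : matKron A B i = vecKron (A i.divNat) (B i.modNat) :=
  rfl

lemma matKron_eq_reindex [Mul F] (A : Matrix (Fin m) (Fin n) F) (B : Matrix (Fin p) (Fin q) F) :
    matKron A B = reindex finProdFinEquiv finProdFinEquiv (A ⊗ₖ B) := by
  ext i j
  simp [matKron, reindex_apply, submatrix_apply, kroneckerMap_apply]

lemma matKron_mul_matKron [CommSemiring F] (A : Matrix (Fin m) (Fin n) F)
    (B : Matrix (Fin p) (Fin q) F) (C : Matrix (Fin n) (Fin r) F) (D : Matrix (Fin q) (Fin s) F) :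
    matKron A B * matKron C D = matKron (A * C) (B * D) := by
  simp only [matKron_eq_reindex, reindex_apply, submatrix_mul_equiv, mul_kronecker_mul]

lemma inv_matKron [CommRing F] (A : Matrix (Fin m) (Fin m) F) (B : Matrix (Fin n) (Fin n) F) :
    (matKron A B)⁻¹ = matKron A⁻¹ B⁻¹ := by
  rw [matKron_eq_reindex, matKron_eq_reindex, inv_reindex, inv_kronecker]

lemma diagonal_vecKron [MulZeroClass F] (x : Fin m → F) (y : Fin n → F) :
    diagonal (vecKron x y) = matKron (diagonal x) (diagonal y) := by
  rw [matKron_eq_reindex, diagonal_kronecker_diagonal, reindex_apply, submatrix_diagonal_equiv]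
  rfl

lemma matKron_mul_diagonal_vecKron_mul_inv [CommRing F] (A : Matrix (Fin m) (Fin m) F)
    (B : Matrix (Fin n) (Fin n) F) (x : Fin m → F) (y : Fin n → F) :
    matKron A B * diagonal (vecKron x y) * (matKron A B)⁻¹ =
      matKron (A * diagonal x * A⁻¹) (B * diagonal y * B⁻¹) := by
  rw [diagonal_vecKron, inv_matKron, matKron_mul_matKron, matKron_mul_matKron]

end Kronecker

lemma entryNonneg.mul {F : Type*} [RCLike F] {a b : F}
    (ha : entryNonneg a) (hb : entryNonneg b) : entryNonneg (a * b) := by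
  obtain ⟨r, hr, rfl⟩ := ha
  obtain ⟨s, hs, rfl⟩ := hb
  exact ⟨r * s, mul_nonneg hr hs, by push_cast; ring⟩

lemma vecKron_mem_spectracone {F : Type*} [RCLike F] {m n : ℕ}
    {S : Matrix (Fin m) (Fin m) F} {T : Matrix (Fin n) (Fin n) F} {x : Fin m → F} {y : Fin n → F}
    (hx : x ∈ spectracone S) (hy : y ∈ spectracone T) :
    vecKron x y ∈ spectracone (matKron S T) := by
  intro i j
  rw [matKron_mul_diagonal_vecKron_mul_inv]
  exact (hx i.divNat j.divNat).mul (hy i.modNat j.modNat)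

theorem matKron_isIdeal_general {F : Type*} [RCLike F] {m n : ℕ}
    (S : Matrix (Fin m) (Fin m) F) (T : Matrix (Fin n) (Fin n) F)
    (hSi : IsIdeal S) (hTi : IsIdeal T) :
    IsIdeal (matKron S T) := by
  obtain ⟨⟨k, hk⟩, hS⟩ := hSi
  obtain ⟨⟨l, hl⟩, hT⟩ := hTi
  refine ⟨⟨finProdFinEquiv (k, l), fun j => ?_⟩, fun i => ?_⟩
  · simp [matKron, Fin.divNat_finProdFinEquiv, Fin.modNat_finProdFinEquiv, hk, hl]
  · rw [matKron_apply_row]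
    exact vecKron_mem_spectracone (hS i.divNat) (hT i.modNat)

/-- If `S` and `T` are ideal, then `S ⊗ T` is ideal: some row of `S ⊗ T` is the
all-ones row and every row of `S ⊗ T` belongs to `𝒞(S ⊗ T)`. -/
theorem matKron_isIdeal {F : Type*} [RCLike F] {m n : ℕ}
    (S : Matrix (Fin m) (Fin m) F) (T : Matrix (Fin n) (Fin n) F)
    (hS : IsUnit S.det) (hT : IsUnit T.det)
    (hSi : IsIdeal S) (hTi : IsIdeal T) :
    IsIdeal (matKron S T) :=
  matKron_isIdeal_general S T hSi hTi
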